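/- For every β with 0 < β ≤ 1, every positive integer d, and every x ∈ [0, 1], the Bernstein polynomial of degree d of the derivative f_β′ satisfies |B_d(f_β′; x) − f_β′(x)| ≤ 3/(8 β² d). In particular, choosing d ≥ 3/(2 β² α) with α > 0 makes the uniform approximation error on [0,1] at most α/4. -/

import Mathlib

/-!
With `r(t) = √((1/2 - t)² + β²) ≥ max(β, |t - 1/2|)` one computes
`f_β''' (t) = -3β²(t - 1/2) / (2 r⁵)`, so `|f_β'''| ≤ 3/(2β²)` and `f_β'` stays within
`3/(2β²) · (y - x)²` of its tangent line at `x`. Bernstein operators reproduce affine functions,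
and the Bernstein weights at `x` have variance `x(1 - x)/d ≤ 1/(4d)`; hence the error is at most
`3/(2β²) · 1/(4d) = 3/(8β²d)`.
-/

open Finset Polynomial

namespace bernsteinPolynomial

lemma eval_nonneg {n ν : ℕ} {x : ℝ} (hx : x ∈ Set.Icc (0 : ℝ) 1) :
    0 ≤ (bernsteinPolynomial ℝ n ν).eval x := by
  have hx₀ : 0 ≤ x := hx.1
  have hx₁ : 0 ≤ 1 - x := sub_nonneg.2 hx.2
  simp only [bernsteinPolynomial, eval_mul, eval_pow, eval_natCast, eval_sub, eval_one, eval_X]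
  positivity

lemma sum_eval (n : ℕ) (x : ℝ) :
    ∑ ν ∈ range (n + 1), (bernsteinPolynomial ℝ n ν).eval x = 1 := by
  simpa [eval_finsetSum] using congrArg (eval x) (sum ℝ n)

lemma sum_div_sub_mul_eval {n : ℕ} (hn : n ≠ 0) (x : ℝ) :
    ∑ ν ∈ range (n + 1), ((ν : ℝ) / n - x) * (bernsteinPolynomial ℝ n ν).eval x = 0 := by
  have h := congrArg (eval x) (sum_smul ℝ n)
  simp only [eval_finsetSum, nsmul_eq_mul, eval_mul, eval_natCast, eval_X] at h
  simp_rw [sub_mul, sum_sub_distrib, div_mul_eq_mul_div, ← sum_div, h, ← mul_sum, sum_eval]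
  field_simp
  ring

lemma sum_div_sub_sq_mul_eval {n : ℕ} (hn : n ≠ 0) (x : ℝ) :
    ∑ ν ∈ range (n + 1), ((ν : ℝ) / n - x) ^ 2 * (bernsteinPolynomial ℝ n ν).eval x =
      x * (1 - x) / n := by
  have h := congrArg (eval x) (variance ℝ n)
  simp only [eval_finsetSum, eval_mul, eval_pow, eval_sub, nsmul_eq_mul, eval_X,
    eval_natCast, eval_one] at h
  have hn' : (n : ℝ) ≠ 0 := Nat.cast_ne_zero.2 hn
  have hsq : ∀ ν : ℕ, ((ν : ℝ) / n - x) ^ 2 = (n * x - ν) ^ 2 / n ^ 2 := fun ν => by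
    field_simp
    ring
  simp_rw [hsq, div_mul_eq_mul_div, ← sum_div, h]
  field_simp

end bernsteinPolynomial

theorem abs_sum_mul_eval_bernsteinPolynomial_sub_le {g : ℝ → ℝ} {c K x : ℝ} {n : ℕ}
    (hn : n ≠ 0) (hx : x ∈ Set.Icc (0 : ℝ) 1)
    (hg : ∀ y, |g y - g x - c * (y - x)| ≤ K * (y - x) ^ 2) :
    |∑ ν ∈ range (n + 1), g (ν / n) * (bernsteinPolynomial ℝ n ν).eval x - g x| ≤
      K * (x * (1 - x) / n) := by
  have hw : ∀ ν, 0 ≤ (bernsteinPolynomial ℝ n ν).eval x := fun _ =>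
    bernsteinPolynomial.eval_nonneg hx
  have hsplit : ∑ ν ∈ range (n + 1), g (ν / n) * (bernsteinPolynomial ℝ n ν).eval x - g x =
      ∑ ν ∈ range (n + 1),
        (g (ν / n) - g x - c * (ν / n - x)) * (bernsteinPolynomial ℝ n ν).eval x := by
    simp_rw [sub_mul, sum_sub_distrib, mul_assoc, ← mul_sum,
      bernsteinPolynomial.sum_div_sub_mul_eval hn, bernsteinPolynomial.sum_eval]
    ring
  rw [hsplit, ← bernsteinPolynomial.sum_div_sub_sq_mul_eval hn x, mul_sum]
  refine (abs_sum_le_sum_abs _ _).trans (sum_le_sum fun ν _ => ?_)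
  rw [abs_mul, abs_of_nonneg (hw ν), ← mul_assoc]
  exact mul_le_mul_of_nonneg_right (hg _) (hw ν)

theorem abs_sub_sub_mul_le_of_abs_deriv_le {g g' g'' : ℝ → ℝ} {L : ℝ}
    (hg : ∀ t, HasDerivAt g (g' t) t) (hg' : ∀ t, HasDerivAt g' (g'' t) t)
    (hg'' : ∀ t, |g'' t| ≤ L) (x y : ℝ) :
    |g y - g x - g' x * (y - x)| ≤ L * (y - x) ^ 2 := by
  have hL : 0 ≤ L := (abs_nonneg _).trans (hg'' x)
  have hg'_lip : ∀ z, |g' z - g' x| ≤ L * |z - x| := fun z =>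
    convex_univ.norm_image_sub_le_of_norm_hasDerivWithin_le
      (fun t _ => (hg' t).hasDerivWithinAt) (fun t _ => hg'' t) (Set.mem_univ x) (Set.mem_univ z)
  have hrem : ∀ z ∈ Set.uIcc x y,
      HasDerivWithinAt (fun z => g z - g x - g' x * (z - x)) (g' z - g' x) (Set.uIcc x y) z :=
    fun z _ => by
      refine (((hg z).sub_const (g x)).sub
        (((hasDerivAt_id z).sub_const x).const_mul (g' x))).hasDerivWithinAt.congr_deriv ?_
      simp
  calc |g y - g x - g' x * (y - x)|
      ≤ L * |y - x| * |y - x| := by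
        simpa using (convex_uIcc x y).norm_image_sub_le_of_norm_hasDerivWithin_le hrem
          (fun z hz => (hg'_lip z).trans
            (mul_le_mul_of_nonneg_left (Set.abs_sub_left_of_mem_uIcc hz) hL))
          Set.left_mem_uIcc Set.right_mem_uIcc
    _ = L * (y - x) ^ 2 := by rw [mul_assoc, abs_mul_abs_self, sq]

noncomputable section

def hingeRadical (β t : ℝ) : ℝ := √((1 / 2 - t) ^ 2 + β ^ 2)

def smoothedHinge (β t : ℝ) : ℝ := (1 / 2 - t + hingeRadical β t) / 2

def smoothedHinge' (β t : ℝ) : ℝ := ((t - 1 / 2) / hingeRadical β t - 1) / 2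

def smoothedHinge'' (β t : ℝ) : ℝ := β ^ 2 / (2 * hingeRadical β t ^ 3)

def smoothedHinge''' (β t : ℝ) : ℝ := -(3 * β ^ 2 * (t - 1 / 2)) / (2 * hingeRadical β t ^ 5)

end

lemma sq_hingeRadical (β t : ℝ) : hingeRadical β t ^ 2 = (1 / 2 - t) ^ 2 + β ^ 2 :=
  Real.sq_sqrt (by positivity)

section

variable {β : ℝ}

lemma hingeRadical_pos (hβ : β ≠ 0) (t : ℝ) : 0 < hingeRadical β t :=
  Real.sqrt_pos.2 (by positivity)

lemma hasDerivAt_hingeRadical (hβ : β ≠ 0) (t : ℝ) :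
    HasDerivAt (hingeRadical β) ((t - 1 / 2) / hingeRadical β t) t := by
  have hq : HasDerivAt (fun t => (1 / 2 - t) ^ 2 + β ^ 2) (2 * (t - 1 / 2)) t := by
    refine ((((hasDerivAt_id t).const_sub (1 / 2)).fun_pow 2).add_const (β ^ 2)).congr_deriv ?_
    simp
    ring
  refine (hq.sqrt (by positivity)).congr_deriv ?_
  rw [hingeRadical]
  field_simp

lemma hasDerivAt_smoothedHinge (hβ : β ≠ 0) (t : ℝ) :
    HasDerivAt (smoothedHinge β) (smoothedHinge' β t) t := by
  refine ((((hasDerivAt_id t).const_sub (1 / 2)).add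
    (hasDerivAt_hingeRadical hβ t)).div_const 2).congr_deriv ?_
  rw [smoothedHinge']
  ring

lemma hasDerivAt_smoothedHinge' (hβ : β ≠ 0) (t : ℝ) :
    HasDerivAt (smoothedHinge' β) (smoothedHinge'' β t) t := by
  have hr := hingeRadical_pos hβ t
  refine (((((hasDerivAt_id t).sub_const (1 / 2)).div (hasDerivAt_hingeRadical hβ t)
    hr.ne').sub_const 1).div_const 2).congr_deriv ?_
  rw [smoothedHinge'', id]
  field_simp
  linear_combination 4 * sq_hingeRadical β t

lemma hasDerivAt_smoothedHinge'' (hβ : β ≠ 0) (t : ℝ) :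
    HasDerivAt (smoothedHinge'' β) (smoothedHinge''' β t) t := by
  have hr := hingeRadical_pos hβ t
  refine ((hasDerivAt_const t (β ^ 2)).div
    (((hasDerivAt_hingeRadical hβ t).fun_pow 3).const_mul 2) (by positivity)).congr_deriv ?_
  rw [smoothedHinge''']
  field_simp
  ring

lemma abs_smoothedHinge'''_le (hβ : β ≠ 0) (t : ℝ) :
    |smoothedHinge''' β t| ≤ 3 / (2 * β ^ 2) := by
  have hr := hingeRadical_pos hβ t
  have hsq := sq_hingeRadical β t
  have hβr : β ^ 4 ≤ hingeRadical β t ^ 4 := by nlinarith [sq_nonneg (1 / 2 - t), sq_nonneg β]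
  have htr : |t - 1 / 2| ≤ hingeRadical β t := by
    rw [← sq_le_sq₀ (abs_nonneg _) hr.le, sq_abs]
    nlinarith
  have hnum : 0 < 3 * β ^ 2 := by positivity
  have hden : 0 < 2 * hingeRadical β t ^ 5 := by positivity
  rw [smoothedHinge''', abs_div, abs_neg, abs_mul, abs_of_pos hnum, abs_of_pos hden,
    div_le_div_iff₀ hden (by positivity)]
  calc 3 * β ^ 2 * |t - 1 / 2| * (2 * β ^ 2) = 6 * β ^ 4 * |t - 1 / 2| := by ring
    _ ≤ 6 * hingeRadical β t ^ 4 * hingeRadical β t := by gcongr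
    _ = 3 * (2 * hingeRadical β t ^ 5) := by ring

end

theorem bernstein_approx_smoothed_hinge_deriv_general (β : ℝ) (hβ : 0 < β)
    (d : ℕ) (hd : 0 < d) (x : ℝ) (hx : x ∈ Set.Icc (0 : ℝ) 1) :
    let f : ℝ → ℝ := fun t => (1 / 2 - t + Real.sqrt ((1 / 2 - t) ^ 2 + β ^ 2)) / 2
    let B : ℝ := ∑ v ∈ Finset.range (d + 1),
      deriv f ((v : ℝ) / d) * (d.choose v : ℝ) * x ^ v * (1 - x) ^ (d - v)
    |B - deriv f x| ≤ 3 / (8 * β ^ 2 * d) ∧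
    ∀ α : ℝ, 0 < α → 3 / (2 * β ^ 2 * α) ≤ (d : ℝ) → |B - deriv f x| ≤ α / 4 := by
  intro f B
  have hf' : ∀ t, deriv f t = smoothedHinge' β t := fun t =>
    (hasDerivAt_smoothedHinge hβ.ne' t).deriv
  have hB : B = ∑ v ∈ range (d + 1),
      smoothedHinge' β (v / d) * (bernsteinPolynomial ℝ d v).eval x := by
    simp only [B, hf', bernsteinPolynomial, eval_mul, eval_pow, eval_natCast, eval_sub, eval_one,
      eval_X, mul_assoc]
  have hbound : |B - deriv f x| ≤ 3 / (8 * β ^ 2 * d) := by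
    have hx_var : x * (1 - x) ≤ 1 / 4 := by nlinarith [sq_nonneg (x - 1 / 2)]
    rw [hB, hf']
    calc _ ≤ 3 / (2 * β ^ 2) * (x * (1 - x) / d) :=
          abs_sum_mul_eval_bernsteinPolynomial_sub_le hd.ne' hx fun y =>
            abs_sub_sub_mul_le_of_abs_deriv_le (hasDerivAt_smoothedHinge' hβ.ne')
              (hasDerivAt_smoothedHinge'' hβ.ne') (abs_smoothedHinge'''_le hβ.ne') x y
      _ ≤ 3 / (2 * β ^ 2) * (1 / 4 / d) := by gcongr
      _ = 3 / (8 * β ^ 2 * d) := by field_simp; ring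
  refine ⟨hbound, fun α hα hdα => hbound.trans ?_⟩
  rw [div_le_iff₀ (by positivity)] at hdα
  rw [div_le_div_iff₀ (by positivity) (by norm_num)]
  nlinarith

/-- For `0 < β ≤ 1`, every positive integer `d`, and `x ∈ [0,1]`, the degree-`d`
Bernstein polynomial of `f_β′` approximates `f_β′` within `3/(8β²d)`; in
particular, choosing `d ≥ 3/(2β²α)` with `α > 0` makes the error at most `α/4`. -/
theorem bernstein_approx_smoothed_hinge_deriv (β : ℝ) (hβ : 0 < β) (hβ1 : β ≤ 1)
    (d : ℕ) (hd : 0 < d) (x : ℝ) (hx : x ∈ Set.Icc (0 : ℝ) 1) :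
    let f : ℝ → ℝ := fun t => (1 / 2 - t + Real.sqrt ((1 / 2 - t) ^ 2 + β ^ 2)) / 2
    let B : ℝ := ∑ v ∈ Finset.range (d + 1),
      deriv f ((v : ℝ) / d) * (d.choose v : ℝ) * x ^ v * (1 - x) ^ (d - v)
    |B - deriv f x| ≤ 3 / (8 * β ^ 2 * d) ∧
    ∀ α : ℝ, 0 < α → 3 / (2 * β ^ 2 * α) ≤ (d : ℝ) → |B - deriv f x| ≤ α / 4 :=
  bernstein_approx_smoothed_hinge_deriv_general β hβ d hd x hx
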